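/- arXiv:1911.01112 — 2 statements merged into one kernel-verified Lean document; each statement's English description precedes it below -/
import Mathlib

section
/- Let Y and Z be Banach spaces over ℝ with a continuous linear embedding Y ↪ Z, let 1 < q ≤ ∞, let I ⊆ ℝ be an interval, and let (f_k) be a sequence of functions I → Y which is bounded in L^q(I; Y), i.e. sup_k ‖f_k‖_{L^q(I;Y)} < ∞. Let f : I → Z be such that for almost every t ∈ I, f_k(t) converges weakly to f(t) in Z (i.e. φ(f_k(t)) → φ(f(t)) for every continuous linear functional φ on Z). If Y is reflexive, then f takes values in Y almost everywhere, f ∈ L^q(I; Y), and ‖f‖_{L^q(I;Y)} ≤ liminf_{k→∞} ‖f_k‖_{L^q(I;Y)}. -/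
open MeasureTheory Filter
open scoped ENNReal

open Metric Set TopologicalSpace
open scoped NNReal Topology

lemma ofReal_norm_eq_coe_nnnorm {E : Type*} [SeminormedAddCommGroup E] (a : E) :
    ENNReal.ofReal ‖a‖ = (‖a‖₊ : ℝ≥0∞) := ofReal_norm a

section Aux
variable {Y Z : Type*} [NormedAddCommGroup Y] [NormedSpace ℝ Y]
  [NormedAddCommGroup Z] [NormedSpace ℝ Z]

/-- Continuous linear functionals are continuous for the weak topology. -/
lemma cazWeakCont (ψ : Y →L[ℝ] ℝ) :
    Continuous fun x : WeakSpace ℝ Y => ψ ((toWeakSpace ℝ Y).symm x) :=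
  WeakBilin.eval_continuous (topDualPairing ℝ Y).flip ψ

/-- A closed convex set is weakly closed. -/
lemma cazWeaklyClosed (T : Set Y) (hconv : Convex ℝ T) (hcl : IsClosed T) :
    IsClosed (toWeakSpace ℝ Y '' T) := by
  rw [← isOpen_compl_iff, isOpen_iff_forall_mem_open]
  intro x hx
  have hxT : (toWeakSpace ℝ Y).symm x ∉ T := by
    intro h
    exact hx ⟨_, h, (toWeakSpace ℝ Y).apply_symm_apply x⟩
  obtain ⟨f, u, hfT, hfx⟩ := geometric_hahn_banach_closed_point hconv hcl hxT
  refine ⟨(fun w : WeakSpace ℝ Y => f ((toWeakSpace ℝ Y).symm w)) ⁻¹' Set.Ioi u, ?_,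
    (cazWeakCont f).isOpen_preimage _ isOpen_Ioi, hfx⟩
  rintro w hw ⟨a, haT, rfl⟩
  rw [Set.mem_preimage, (toWeakSpace ℝ Y).symm_apply_apply] at hw
  exact absurd (hfT a haT) (not_lt.2 (le_of_lt hw))

/-- Reflexivity: closed balls are weakly compact. -/
lemma cazWeakCompactBall
    (hrefl : Function.Surjective (NormedSpace.inclusionInDoubleDual ℝ Y)) (R : ℝ) :
    IsCompact (toWeakSpace ℝ Y '' closedBall (0:Y) R) := by
  set J := NormedSpace.inclusionInDoubleDual ℝ Y with hJ
  have hnorm : ∀ x : Y, ‖J x‖ = ‖x‖ := fun x =>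
    (NormedSpace.inclusionInDoubleDualLi ℝ (E := Y)).norm_map x
  have hJinj : Function.Injective J := fun a b hab => by
    have : ‖J (a - b)‖ = 0 := by rw [map_sub, hab, sub_self]; exact ContinuousLinearMap.opNorm_zero
    rw [hnorm] at this
    exact sub_eq_zero.1 (norm_eq_zero.1 this)
  let e : Y ≃ StrongDual ℝ (StrongDual ℝ Y) := Equiv.ofBijective J ⟨hJinj, hrefl⟩
  have he : ∀ x, e x = J x := fun _ => rfl
  have hcont : Continuous fun θ : WeakDual ℝ (StrongDual ℝ Y) =>
      toWeakSpace ℝ Y (e.symm θ) := by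
    apply WeakBilin.continuous_of_continuous_eval
    intro ψ
    have key : ∀ θ : WeakDual ℝ (StrongDual ℝ Y),
        (topDualPairing ℝ Y).flip (toWeakSpace ℝ Y (e.symm θ)) ψ = θ ψ := by
      intro θ
      have h2 : J (e.symm θ) = θ := e.apply_symm_apply θ
      show ψ (e.symm θ) = θ ψ
      conv_rhs => rw [← h2]
      exact (NormedSpace.dual_def ℝ Y (e.symm θ) ψ).symm
    simp only [key]
    exact WeakDual.eval_continuous ψ
  have hK := WeakDual.isCompact_closedBall (𝕜 := ℝ) (E := StrongDual ℝ Y) 0 R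
  have himage := hK.image hcont
  convert himage using 1
  ext w
  constructor
  · rintro ⟨x, hx, rfl⟩
    refine ⟨e x, ?_, by show (toWeakSpace ℝ Y) (e.symm (e x)) = (toWeakSpace ℝ Y) x; rw [Equiv.symm_apply_apply]⟩
    refine mem_closedBall_zero_iff.2 ?_
    show ‖e x‖ ≤ R
    rw [he, hnorm]
    rwa [mem_closedBall, dist_zero_right] at hx
  · rintro ⟨θ, hθ, rfl⟩
    refine ⟨e.symm θ, ?_, rfl⟩
    rw [Set.mem_preimage, mem_closedBall, dist_zero_right] at hθ
    rw [mem_closedBall, dist_zero_right, ← hnorm (e.symm θ), ← he]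
    exact (congrArg norm (e.apply_symm_apply θ)).trans_le hθ


section Aux2
variable {Y Z : Type*} [NormedAddCommGroup Y] [NormedSpace ℝ Y]
  [NormedAddCommGroup Z] [NormedSpace ℝ Z]

/-- Pointwise lemma: a bounded sequence with iota-weak limit z has a weak limit point
which is a preimage of z. -/
lemma cazExistsPreimage
    (ι : Y →L[ℝ] Z) (hι : Function.Injective ι)
    (hrefl : Function.Surjective (NormedSpace.inclusionInDoubleDual ℝ Y))
    (T : Set Y) (hconv : Convex ℝ T) (hcl : IsClosed T)
    (y : ℕ → Y) (hyT : ∀ k, y k ∈ T) (z : Z)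
    (hz : ∀ φ : Z →L[ℝ] ℝ, Tendsto (fun k => φ (ι (y k))) atTop (𝓝 (φ z)))
    (hfin : (atTop.liminf fun k => (‖y k‖₊ : ℝ≥0∞)) < ⊤) :
    ∃ x : Y, ι x = z ∧ x ∈ T ∧ (‖x‖₊ : ℝ≥0∞) ≤ atTop.liminf fun k => (‖y k‖₊ : ℝ≥0∞) := by
  set c := atTop.liminf fun k => (‖y k‖₊ : ℝ≥0∞) with hc
  have main : ∀ ε : ℝ≥0, 0 < ε → ∃ x : Y, ι x = z ∧ x ∈ T ∧ (‖x‖₊ : ℝ≥0∞) ≤ c + ε := by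
    intro ε hε
    have hlt : c < c + ε := ENNReal.lt_add_right hfin.ne (by exact_mod_cast hε.ne')
    have hfreq : ∃ᶠ k in atTop, (‖y k‖₊ : ℝ≥0∞) < c + ε :=
      frequently_lt_of_liminf_lt (by isBoundedDefault) hlt
    obtain ⟨n, hnmono, hn⟩ := Filter.extraction_of_frequently_atTop hfreq
    set R := (c + ε).toReal with hR
    have hctop : c + ε ≠ ⊤ := by
      refine ENNReal.add_ne_top.2 ⟨hfin.ne, ENNReal.coe_ne_top⟩
    have hyR : ∀ j, y (n j) ∈ closedBall (0:Y) R ∩ T := by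
      intro j
      refine ⟨?_, hyT _⟩
      rw [mem_closedBall, dist_zero_right]
      have h1 : (‖y (n j)‖₊ : ℝ≥0∞) ≤ c + ε := (hn j).le
      have := ENNReal.toReal_mono hctop h1
      simpa using this
    have hKc : IsCompact (toWeakSpace ℝ Y '' (closedBall (0:Y) R ∩ T)) := by
      have h1 : toWeakSpace ℝ Y '' (closedBall (0:Y) R ∩ T)
          = (toWeakSpace ℝ Y '' closedBall (0:Y) R) ∩ (toWeakSpace ℝ Y '' T) :=
        Set.image_inter (toWeakSpace ℝ Y).injective
      rw [h1]
      exact (cazWeakCompactBall hrefl R).inter_right (cazWeaklyClosed T hconv hcl)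
    have hmap : Filter.map (fun j => toWeakSpace ℝ Y (y (n j))) atTop
        ≤ 𝓟 (toWeakSpace ℝ Y '' (closedBall (0:Y) R ∩ T)) := by
      exact Filter.tendsto_principal.2
        (Filter.Eventually.of_forall fun (j : ℕ) => ⟨y (n j), hyR j, rfl⟩)
    obtain ⟨w, hwK, hw⟩ := hKc.exists_mapClusterPt hmap
    obtain ⟨x, hxK, hxw⟩ := hwK
    refine ⟨x, ?_, hxK.2, ?_⟩
    · -- ι x = z via functionals
      rw [NormedSpace.eq_iff_forall_dual_eq ℝ]
      intro φ
      set ψ : Y →L[ℝ] ℝ := φ.comp ι with hψ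
      have hclu := hw.tendsto_comp ((cazWeakCont ψ).tendsto w)
      have heq : ((fun v : WeakSpace ℝ Y => ψ ((toWeakSpace ℝ Y).symm v)) ∘
            fun j => toWeakSpace ℝ Y (y (n j))) = fun j => ψ (y (n j)) := by
        funext j
        simp [Function.comp, LinearEquiv.symm_apply_apply]
      rw [heq] at hclu
      have htend : Tendsto (fun j => ψ (y (n j))) atTop (𝓝 (φ z)) :=
        (hz φ).comp (hnmono.tendsto_atTop)
      have hx' : (toWeakSpace ℝ Y).symm w = x := by rw [← hxw, LinearEquiv.symm_apply_apply]
      rw [hx'] at hclu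
      have : ψ x = φ z := by
        have hne : (𝓝 (ψ x) ⊓ Filter.map (fun j => ψ (y (n j))) atTop).NeBot := hclu
        have hle : 𝓝 (ψ x) ⊓ Filter.map (fun j => ψ (y (n j))) atTop
            ≤ 𝓝 (ψ x) ⊓ 𝓝 (φ z) := inf_le_inf_left _ htend
        exact eq_of_nhds_neBot (hne.mono hle)
      exact this
    · -- norm bound
      have hxball : x ∈ closedBall (0:Y) R := hxK.1
      rw [mem_closedBall, dist_zero_right] at hxball
      calc (‖x‖₊ : ℝ≥0∞) = ENNReal.ofReal ‖x‖ := (ofReal_norm_eq_coe_nnnorm x).symm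
        _ ≤ ENNReal.ofReal R := ENNReal.ofReal_le_ofReal hxball
        _ = c + ε := by rw [hR, ENNReal.ofReal_toReal hctop]
  obtain ⟨x₀, hx₀, hx₀T, _⟩ := main 1 one_pos
  refine ⟨x₀, hx₀, hx₀T, ?_⟩
  refine ENNReal.le_of_forall_pos_le_add fun ε hε _ => ?_
  obtain ⟨x, hx, _, hxb⟩ := main ε hε
  have : x = x₀ := hι (by rw [hx, hx₀])
  rwa [this] at hxb

end Aux2
section Aux3
variable {Y Z : Type*} [NormedAddCommGroup Y] [NormedSpace ℝ Y]
  [NormedAddCommGroup Z] [NormedSpace ℝ Z]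

/-- Functionals of the form `φ ∘ ι` are dense in the dual of `Y` when `Y` is reflexive
and `ι` is injective. -/
lemma cazDenseComp (ι : Y →L[ℝ] Z) (hι : Function.Injective ι)
    (hrefl : Function.Surjective (NormedSpace.inclusionInDoubleDual ℝ Y))
    (ψ : Y →L[ℝ] ℝ) {ε : ℝ} (hε : 0 < ε) :
    ∃ φ : Z →L[ℝ] ℝ, ‖ψ - φ.comp ι‖ < ε := by
  let Lc : (Z →L[ℝ] ℝ) →ₗ[ℝ] (Y →L[ℝ] ℝ) :=
    { toFun := fun φ => φ.comp ι
      map_add' := fun φ₁ φ₂ => by ext v; simp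
      map_smul' := fun r φ => by ext v; simp }
  set Rng := (LinearMap.range Lc).topologicalClosure with hRng
  have hmem : ψ ∈ Rng := by
    by_contra hψ
    obtain ⟨f, u, hfR, hfψ⟩ := geometric_hahn_banach_closed_point Rng.convex
      (LinearMap.range Lc).isClosed_topologicalClosure hψ
    have hu0 : 0 < u := by simpa using hfR 0 Rng.zero_mem
    have hf0 : ∀ a ∈ Rng, f a = 0 := by
      intro a ha
      by_contra h0
      have hs : ((u + 1) / f a) • a ∈ Rng := Rng.smul_mem _ ha
      have := hfR _ hs
      rw [_root_.map_smul, smul_eq_mul, div_mul_cancel₀ _ h0] at this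
      linarith
    obtain ⟨y₀, hy₀⟩ := hrefl f
    have hι0 : ι y₀ = 0 := by
      apply NormedSpace.eq_zero_of_forall_dual_eq_zero ℝ
      intro φ
      have h1 : Lc φ ∈ Rng := Submodule.le_topologicalClosure _ (LinearMap.mem_range_self Lc φ)
      have h2 : f (Lc φ) = 0 := hf0 _ h1
      have h3 : NormedSpace.inclusionInDoubleDual ℝ Y y₀ (Lc φ) = 0 := by rw [hy₀]; exact h2
      rw [NormedSpace.dual_def] at h3
      exact h3
    have hy0 : y₀ = 0 := hι (by rw [hι0, map_zero])
    rw [hy0, map_zero] at hy₀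
    have : f ψ = 0 := by rw [← hy₀]; rfl
    linarith
  have hclo : ψ ∈ closure ((LinearMap.range Lc : Submodule ℝ (Y →L[ℝ] ℝ)) : Set (Y →L[ℝ] ℝ)) := by
    rw [← Submodule.topologicalClosure_coe]
    exact hmem
  obtain ⟨b, hb, hdist⟩ := Metric.mem_closure_iff.1 hclo ε hε
  obtain ⟨φ, rfl⟩ := hb
  exact ⟨φ, by rwa [dist_eq_norm] at hdist⟩

/-- Norm as a countable sup of dual pairings, valid on the closure of the range of `s`. -/
lemma cazNormEqISup {s : ℕ → Y} {ψ : ℕ → Y →L[ℝ] ℝ}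
    (hψ : ∀ n, ‖ψ n‖ ≤ 1 ∧ ψ n (s n) = ‖s n‖)
    {v : Y} (hv : v ∈ closure (Set.range s)) :
    (‖v‖₊ : ℝ≥0∞) = ⨆ n, ENNReal.ofReal (ψ n v) := by
  apply le_antisymm
  · rw [← ofReal_norm_eq_coe_nnnorm]
    refine ENNReal.le_of_forall_pos_le_add fun δ hδ _ => ?_
    have hδ2 : 0 < (δ : ℝ) / 2 := by positivity
    obtain ⟨w, hwmem, hw⟩ := Metric.mem_closure_iff.1 hv ((δ : ℝ) / 4) (by positivity)
    obtain ⟨n, rfl⟩ := hwmem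
    rw [dist_eq_norm] at hw
    have h1 : ψ n v = ψ n (s n) + ψ n (v - s n) := by rw [← map_add]; congr 1; abel
    have h2 : ψ n (v - s n) ≥ -(‖v - s n‖) := by
      have := (ψ n).le_opNorm (v - s n)
      have habs : |ψ n (v - s n)| ≤ ‖v - s n‖ := by
        refine le_trans ?_ (le_trans this ?_)
        · exact le_of_eq (Real.norm_eq_abs _).symm
        · exact mul_le_of_le_one_left (norm_nonneg _) (hψ n).1
      linarith [neg_abs_le (ψ n (v - s n))]
    have h3 : ‖s n‖ ≥ ‖v‖ - ‖v - s n‖ := by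
      have := norm_sub_norm_le v (s n)
      have h4 : ‖v‖ - ‖s n‖ ≤ ‖v - s n‖ := le_trans (le_abs_self _) (abs_norm_sub_norm_le v (s n))
      linarith
    have hkey : ‖v‖ ≤ ψ n v + (δ : ℝ) / 2 := by
      rw [h1, (hψ n).2]
      have hsn : ‖v - s n‖ < (δ : ℝ) / 4 := hw
      linarith
    calc ENNReal.ofReal ‖v‖ ≤ ENNReal.ofReal (ψ n v + (δ : ℝ) / 2) :=
          ENNReal.ofReal_le_ofReal hkey
      _ ≤ ENNReal.ofReal (ψ n v) + ENNReal.ofReal ((δ : ℝ) / 2) := ENNReal.ofReal_add_le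
      _ ≤ (⨆ m, ENNReal.ofReal (ψ m v)) + δ := by
          gcongr
          · exact le_iSup (fun m => ENNReal.ofReal (ψ m v)) n
          · calc ENNReal.ofReal ((δ : ℝ) / 2) ≤ ENNReal.ofReal (δ : ℝ) := by
                  apply ENNReal.ofReal_le_ofReal; linarith [δ.2]
              _ = δ := ENNReal.ofReal_coe_nnreal
  · refine iSup_le fun n => ?_
    rw [← ofReal_norm_eq_coe_nnnorm]
    apply ENNReal.ofReal_le_ofReal
    calc ψ n v ≤ |ψ n v| := le_abs_self _
      _ = ‖ψ n v‖ := (Real.norm_eq_abs _).symm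
      _ ≤ ‖ψ n‖ * ‖v‖ := (ψ n).le_opNorm v
      _ ≤ ‖v‖ := mul_le_of_le_one_left (norm_nonneg _) (hψ n).1

end Aux3
end Aux
/-- Cazenave's weak lower semicontinuity lemma (Theorem 1.2.5 of Cazenave's book):
let `Y ↪ Z` be a continuous linear embedding of Banach spaces, `1 < q ≤ ∞`, `I ⊆ ℝ` an
interval, `(f k)` a sequence bounded in `L^q(I; Y)` such that `f k t` converges weakly
in `Z` to `F t` for a.e. `t ∈ I`. If `Y` is reflexive then `F` takes values in `Y`
almost everywhere, belongs to `L^q(I; Y)`, and its norm is bounded by the liminf of the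
norms of the `f k`. -/
theorem weak_limit_in_Lq {Y Z : Type*}
    [NormedAddCommGroup Y] [NormedSpace ℝ Y] [CompleteSpace Y]
    [NormedAddCommGroup Z] [NormedSpace ℝ Z] [CompleteSpace Z]
    (ι : Y →L[ℝ] Z) (hι : Function.Injective ι)
    (hrefl : Function.Surjective (NormedSpace.inclusionInDoubleDual ℝ Y))
    (q : ℝ≥0∞) (hq : 1 < q)
    (I : Set ℝ) (hI : I.OrdConnected)
    (f : ℕ → ℝ → Y) (F : ℝ → Z)
    (hmeas : ∀ k, AEStronglyMeasurable (f k) (volume.restrict I))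
    (hbdd : ⨆ k, eLpNorm (f k) q (volume.restrict I) < ⊤)
    (hconv : ∀ᵐ t ∂(volume.restrict I), ∀ φ : Z →L[ℝ] ℝ,
      Tendsto (fun k => φ (ι (f k t))) atTop (nhds (φ (F t)))) :
    ∃ g : ℝ → Y,
      (∀ᵐ t ∂(volume.restrict I), ι (g t) = F t) ∧
      MemLp g q (volume.restrict I) ∧
      eLpNorm g q (volume.restrict I)
        ≤ atTop.liminf (fun k => eLpNorm (f k) q (volume.restrict I)) := by
  classical
  letI : MeasurableSpace Y := borel Y
  haveI : BorelSpace Y := ⟨rfl⟩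
  set μ := volume.restrict I with hμdef
  set f' : ℕ → ℝ → Y := fun k => (hmeas k).mk (f k) with hf'def
  have hf'sm : ∀ k, StronglyMeasurable (f' k) := fun k => (hmeas k).stronglyMeasurable_mk
  have hf'ae : ∀ᵐ t ∂μ, ∀ k, f k t = f' k t := ae_all_iff.2 fun k => (hmeas k).ae_eq_mk
  have heLp : ∀ k, eLpNorm (f' k) q μ = eLpNorm (f k) q μ :=
    fun k => eLpNorm_congr_ae ((hmeas k).ae_eq_mk).symm
  set L := atTop.liminf (fun k => eLpNorm (f k) q μ) with hLdef
  have hLsup : L ≤ ⨆ k, eLpNorm (f k) q μ :=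
    liminf_le_of_frequently_le'
      (Filter.Frequently.of_forall fun k => le_iSup (fun k => eLpNorm (f k) q μ) k)
  have hLlt : L < ⊤ := lt_of_le_of_lt hLsup hbdd
  have hq0 : q ≠ 0 := (lt_trans zero_lt_one hq).ne'
  set h : ℝ → ℝ≥0∞ := fun t => atTop.liminf fun k => (‖f' k t‖₊ : ℝ≥0∞) with hhdef
  -- a.e. finiteness of the pointwise liminf
  have hhfin : ∀ᵐ t ∂μ, h t < ⊤ := by
    set R : ℝ≥0 := (⨆ k, eLpNorm (f k) q μ).toNNReal with hRdef
    have hbddR : ∀ k, eLpNorm (f' k) q μ ≤ R := by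
      intro k
      rw [heLp, hRdef, ENNReal.coe_toNNReal hbdd.ne]
      exact le_iSup (fun k => eLpNorm (f k) q μ) k
    exact ae_bdd_liminf_atTop_of_eLpNorm_bdd hq0 (fun k => (hf'sm k).measurable) hbddR
  -- separable closed submodule containing all values
  have hsep : IsSeparable (⋃ k, Set.range (f' k)) :=
    IsSeparable.iUnion fun k => (hf'sm k).isSeparable_range
  set Tmod : Submodule ℝ Y := (Submodule.span ℝ (⋃ k, Set.range (f' k))).topologicalClosure
    with hTmoddef
  have hTsep : IsSeparable (Tmod : Set Y) := by
    rw [hTmoddef, Submodule.topologicalClosure_coe]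
    exact hsep.span.closure
  have hTcl : IsClosed (Tmod : Set Y) :=
    (Submodule.span ℝ (⋃ k, Set.range (f' k))).isClosed_topologicalClosure
  have hfT : ∀ k t, f' k t ∈ Tmod := fun k t =>
    Submodule.le_topologicalClosure _
      (Submodule.subset_span (Set.mem_iUnion.2 ⟨k, Set.mem_range_self t⟩))
  -- a.e. existence of preimages
  have hgood : ∀ᵐ t ∂μ, ∃ x : Y, ι x = F t ∧ x ∈ (Tmod : Set Y) ∧ (‖x‖₊ : ℝ≥0∞) ≤ h t := by
    filter_upwards [hconv, hf'ae, hhfin] with t h1 h2 h3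
    exact cazExistsPreimage ι hι hrefl (Tmod : Set Y) Tmod.convex hTcl
      (fun k => f' k t) (fun k => hfT k t) (F t)
      (fun φ => (h1 φ).congr fun k => by rw [h2 k]) h3
  set g : ℝ → Y := fun t =>
    if hx : ∃ x : Y, ι x = F t ∧ x ∈ (Tmod : Set Y) ∧ (‖x‖₊ : ℝ≥0∞) ≤ h t then hx.choose else 0
    with hgdef
  have hg : ∀ᵐ t ∂μ, ι (g t) = F t ∧ g t ∈ (Tmod : Set Y) ∧ (‖g t‖₊ : ℝ≥0∞) ≤ h t := by
    filter_upwards [hgood] with t hx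
    simp only [hgdef, dif_pos hx]
    exact hx.choose_spec
  -- weak measurability through functionals on Z
  have hFm : ∀ φ : Z →L[ℝ] ℝ, AEMeasurable (fun t => φ (F t)) μ := by
    intro φ
    apply aemeasurable_of_tendsto_metrizable_ae' (f := fun k t => φ (ι (f' k t)))
    · exact fun k =>
        ((φ.comp ι).continuous.comp_stronglyMeasurable (hf'sm k)).measurable.aemeasurable
    · filter_upwards [hconv, hf'ae] with t h1 h2
      exact (h1 φ).congr fun k => by rw [h2 k]
  -- weak measurability through functionals on Y
  have hψg : ∀ ψ : Y →L[ℝ] ℝ, AEMeasurable (fun t => ψ (g t)) μ := by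
    intro ψ
    have hφs : ∀ n : ℕ, ∃ φ : Z →L[ℝ] ℝ, ‖ψ - φ.comp ι‖ < 1 / (n + 1) :=
      fun n => cazDenseComp ι hι hrefl ψ (by positivity)
    choose φs hφs using hφs
    apply aemeasurable_of_tendsto_metrizable_ae' (f := fun n t => φs n (F t))
    · exact fun n => hFm (φs n)
    · filter_upwards [hg] with t ht
      rw [tendsto_iff_norm_sub_tendsto_zero]
      have hb : ∀ n : ℕ, ‖φs n (F t) - ψ (g t)‖ ≤ (1 / ((n : ℝ) + 1)) * ‖g t‖ := by
        intro n
        rw [← ht.1]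
        have heq : φs n (ι (g t)) - ψ (g t) = -((ψ - (φs n).comp ι) (g t)) := by
          simp [ContinuousLinearMap.sub_apply]
        rw [heq, norm_neg]
        calc ‖(ψ - (φs n).comp ι) (g t)‖ ≤ ‖ψ - (φs n).comp ι‖ * ‖g t‖ :=
            (ψ - (φs n).comp ι).le_opNorm (g t)
          _ ≤ (1 / ((n : ℝ) + 1)) * ‖g t‖ :=
            mul_le_mul_of_nonneg_right (by exact_mod_cast (hφs n).le) (norm_nonneg _)
      have hlim : Tendsto (fun n : ℕ => (1 / ((n : ℝ) + 1)) * ‖g t‖) atTop (𝓝 0) := by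
        have := tendsto_one_div_add_atTop_nhds_zero_nat.mul_const ‖g t‖
        simpa using this
      exact squeeze_zero (fun n => norm_nonneg _) hb hlim
  -- a countable dense sequence in Tmod
  haveI hTsepSpace : SeparableSpace (Tmod : Set Y) := hTsep.separableSpace
  obtain ⟨c, hc_count, hc_dense⟩ := TopologicalSpace.exists_countable_dense (Tmod : Set Y)
  have hc0 : ((Subtype.val '' c ∪ {0}) : Set Y).Nonempty := ⟨0, Set.mem_union_right _ rfl⟩
  obtain ⟨s, hs⟩ := (Set.Countable.union (hc_count.image Subtype.val)
    (Set.countable_singleton 0)).exists_eq_range hc0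
  have hsT : ∀ n, s n ∈ Tmod := by
    intro n
    have hmem : s n ∈ Subtype.val '' c ∪ {0} := by rw [hs]; exact Set.mem_range_self n
    rcases hmem with ⟨⟨a, ha⟩, _, rfl⟩ | hmem
    · exact ha
    · rw [Set.mem_singleton_iff] at hmem; rw [hmem]; exact Tmod.zero_mem
  have hdense : (Tmod : Set Y) ⊆ closure (Set.range s) := by
    intro v hv
    have h1 : (⟨v, hv⟩ : (Tmod : Set Y)) ∈ closure c := by
      rw [hc_dense.closure_eq]; exact Set.mem_univ _
    have h2 : v ∈ closure (Subtype.val '' c) :=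
      image_closure_subset_closure_image continuous_subtype_val ⟨_, h1, rfl⟩
    exact closure_mono (Set.subset_union_left.trans hs.subset) h2
  have hψs : ∀ n, ∃ ψ : Y →L[ℝ] ℝ, ‖ψ‖ ≤ 1 ∧ ψ (s n) = ‖s n‖ :=
    fun n => exists_dual_vector'' ℝ (s n)
  choose ψs hψs using hψs
  -- a.e.-measurable distance functions
  have hd_ae : ∀ m : ℕ, AEMeasurable (fun t => ⨆ n, ENNReal.ofReal (ψs n (g t - s m))) μ := by
    intro m
    apply AEMeasurable.iSup
    intro n
    apply ENNReal.measurable_ofReal.comp_aemeasurable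
    have heq : (fun t => ψs n (g t - s m)) = fun t => ψs n (g t) - ψs n (s m) := by
      funext t; rw [map_sub]
    rw [heq]
    exact (hψg (ψs n)).sub aemeasurable_const
  set D : ℕ → ℝ → ℝ≥0∞ := fun m => (hd_ae m).mk _ with hDdef
  have hDmeas : ∀ m, Measurable (D m) := fun m => (hd_ae m).measurable_mk
  have hDae : ∀ᵐ t ∂μ, ∀ m, D m t = (‖g t - s m‖₊ : ℝ≥0∞) := by
    have h1 : ∀ᵐ t ∂μ, ∀ m : ℕ, D m t = ⨆ n, ENNReal.ofReal (ψs n (g t - s m)) :=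
      ae_all_iff.2 fun m => ((hd_ae m).ae_eq_mk).symm
    filter_upwards [h1, hg] with t ht hgt
    intro m
    rw [ht m]
    exact (cazNormEqISup hψs (hdense (Submodule.sub_mem Tmod hgt.2.1 (hsT m)))).symm
  -- measurable approximating sequence
  have hEx : ∀ j : ℕ, ∀ t : ℝ, ∃ m : ℕ,
      (D m t < ENNReal.ofReal (1 / (j + 1)) ∨
        ∀ m', ¬ D m' t < ENNReal.ofReal (1 / (j + 1))) := by
    intro j t
    by_cases hcase : ∃ m, D m t < ENNReal.ofReal (1 / (j + 1))
    · obtain ⟨m, hm⟩ := hcase; exact ⟨m, Or.inl hm⟩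
    · push_neg at hcase
      exact ⟨0, Or.inr fun m' => not_lt.2 (hcase m')⟩
  set gj : ℕ → ℝ → Y := fun j t => s (Nat.find (hEx j t)) with hgjdef
  have hgjmeas : ∀ j, Measurable (gj j) := by
    intro j
    have hpm : ∀ m : ℕ, MeasurableSet {t : ℝ |
        D m t < ENNReal.ofReal (1 / (j + 1)) ∨
          ∀ m', ¬ D m' t < ENNReal.ofReal (1 / (j + 1))} := by
      intro m
      have h1 : MeasurableSet {t : ℝ | D m t < ENNReal.ofReal (1 / (j + 1))} :=
        (hDmeas m) measurableSet_Iio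
      have h2 : MeasurableSet {t : ℝ | ∀ m', ¬ D m' t < ENNReal.ofReal (1 / (j + 1))} := by
        rw [Set.setOf_forall]
        exact MeasurableSet.iInter fun m' => ((hDmeas m') measurableSet_Iio).compl
      rw [Set.setOf_or]
      exact h1.union h2
    exact Measurable.find (f := fun m (_ : ℝ) => s m) (fun m => measurable_const) hpm (hEx j)
  have hgjsm : ∀ j, StronglyMeasurable (gj j) := by
    intro j
    refine stronglyMeasurable_iff_measurable_separable.2 ⟨hgjmeas j, ?_⟩
    refine ((Set.countable_range s).isSeparable).mono ?_
    rintro _ ⟨t, rfl⟩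
    exact ⟨_, rfl⟩
  have htendsto : ∀ᵐ t ∂μ, Tendsto (fun j => gj j t) atTop (𝓝 (g t)) := by
    filter_upwards [hDae, hg] with t hDt hgt
    have hkey : ∀ j : ℕ, ‖g t - gj j t‖ < 1 / ((j : ℝ) + 1) := by
      intro j
      have hjpos : (0:ℝ) < 1 / ((j : ℝ) + 1) := by positivity
      have hex : ∃ m, D m t < ENNReal.ofReal (1 / ((j : ℝ) + 1)) := by
        obtain ⟨w, hwmem, hwd⟩ := Metric.mem_closure_iff.1 (hdense hgt.2.1) _ hjpos
        obtain ⟨m, rfl⟩ := hwmem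
        refine ⟨m, ?_⟩
        rw [hDt m, ← ofReal_norm_eq_coe_nnnorm]
        exact (ENNReal.ofReal_lt_ofReal_iff hjpos).2 (by rwa [dist_eq_norm] at hwd)
      rcases Nat.find_spec (hEx j t) with hlt | hbad
      · rw [hDt _, ← ofReal_norm_eq_coe_nnnorm] at hlt
        exact (ENNReal.ofReal_lt_ofReal_iff_of_nonneg (norm_nonneg _)).1 hlt
      · obtain ⟨m, hm⟩ := hex
        exact absurd hm (hbad m)
    have hlim : Tendsto (fun j : ℕ => 1 / ((j : ℝ) + 1)) atTop (𝓝 0) :=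
      tendsto_one_div_add_atTop_nhds_zero_nat
    refine tendsto_iff_dist_tendsto_zero.2 ?_
    refine squeeze_zero (fun j => dist_nonneg) (fun j => ?_) hlim
    rw [dist_eq_norm, norm_sub_rev]
    exact (hkey j).le
  have hgsm : AEStronglyMeasurable g μ :=
    aestronglyMeasurable_of_tendsto_ae atTop (fun j => (hgjsm j).aestronglyMeasurable) htendsto
  -- the norm bound
  have hbound : eLpNorm g q μ ≤ L := by
    by_cases hqtop : q = ⊤
    · rw [hqtop, eLpNorm_exponent_top]
      have haeb : ∀ᵐ t ∂μ, ∀ k, (‖f' k t‖₊ : ℝ≥0∞) ≤ eLpNorm (f k) q μ := by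
        refine ae_all_iff.2 fun k => ?_
        have h1 : ∀ᵐ t ∂μ, (‖f' k t‖₊ : ℝ≥0∞) ≤ eLpNormEssSup (f' k) μ := ae_le_eLpNormEssSup
        have h2 : eLpNormEssSup (f' k) μ = eLpNorm (f k) q μ := by
          rw [← eLpNorm_exponent_top, ← hqtop, heLp k]
        filter_upwards [h1] with t ht
        rw [← h2]; exact ht
      show essSup (fun t => (‖g t‖₊ : ℝ≥0∞)) μ ≤ L
      refine essSup_le_of_ae_le L ?_
      filter_upwards [hg, haeb] with t hgt hkt
      calc (‖g t‖₊ : ℝ≥0∞) ≤ h t := hgt.2.2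
        _ ≤ atTop.liminf fun k => eLpNorm (f k) q μ :=
          liminf_le_liminf (Filter.Eventually.of_forall hkt)
        _ = L := by rw [hLdef]
    · set p := q.toReal with hpdef
      have hppos : 0 < p := ENNReal.toReal_pos hq0 hqtop
      have hgq : eLpNorm g q μ = (∫⁻ t, (‖g t‖₊ : ℝ≥0∞) ^ p ∂μ) ^ (1/p) :=
        eLpNorm_eq_lintegral_rpow_enorm_toReal hq0 hqtop
      have hfq : ∀ k, eLpNorm (f' k) q μ = (∫⁻ t, (‖f' k t‖₊ : ℝ≥0∞) ^ p ∂μ) ^ (1/p) :=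
        fun k => eLpNorm_eq_lintegral_rpow_enorm_toReal hq0 hqtop
      have hmono : Monotone (fun x : ℝ≥0∞ => x ^ p) :=
        fun a b hab => ENNReal.rpow_le_rpow hab hppos.le
      have hcont : Continuous (fun x : ℝ≥0∞ => x ^ p) := ENNReal.continuous_rpow_const
      have hpt : ∀ t : ℝ, (h t) ^ p = atTop.liminf fun k => ((‖f' k t‖₊ : ℝ≥0∞) ^ p) := by
        intro t
        rw [hhdef]
        exact hmono.map_liminf_of_continuousAt (F := atTop)
          (fun k => (‖f' k t‖₊ : ℝ≥0∞)) hcont.continuousAt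
      have hint : (∫⁻ t, (‖g t‖₊ : ℝ≥0∞) ^ p ∂μ)
          ≤ atTop.liminf fun k => ∫⁻ t, (‖f' k t‖₊ : ℝ≥0∞) ^ p ∂μ := by
        have h1 : (∫⁻ t, (‖g t‖₊ : ℝ≥0∞) ^ p ∂μ) ≤ ∫⁻ t, (h t) ^ p ∂μ := by
          apply lintegral_mono_ae
          filter_upwards [hg] with t hgt
          exact ENNReal.rpow_le_rpow hgt.2.2 hppos.le
        refine h1.trans ?_
        have h2 : (∫⁻ t, (h t) ^ p ∂μ)
            = ∫⁻ t, atTop.liminf (fun k => (‖f' k t‖₊ : ℝ≥0∞) ^ p) ∂μ :=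
          lintegral_congr fun t => hpt t
        rw [h2]
        exact lintegral_liminf_le fun k => ((hf'sm k).enorm).pow_const p
      have hmono' : Monotone (fun x : ℝ≥0∞ => x ^ (1/p)) :=
        fun a b hab => ENNReal.rpow_le_rpow hab (by positivity)
      have hcont' : Continuous (fun x : ℝ≥0∞ => x ^ (1/p)) := ENNReal.continuous_rpow_const
      have h3 : ((atTop.liminf fun k => ∫⁻ t, (‖f' k t‖₊ : ℝ≥0∞) ^ p ∂μ) : ℝ≥0∞) ^ (1/p)
          = atTop.liminf fun k => ((∫⁻ t, (‖f' k t‖₊ : ℝ≥0∞) ^ p ∂μ) ^ (1/p)) :=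
        hmono'.map_liminf_of_continuousAt (F := atTop)
          (fun k => ∫⁻ t, (‖f' k t‖₊ : ℝ≥0∞) ^ p ∂μ) hcont'.continuousAt
      calc eLpNorm g q μ = (∫⁻ t, (‖g t‖₊ : ℝ≥0∞) ^ p ∂μ) ^ (1/p) := hgq
        _ ≤ ((atTop.liminf fun k => ∫⁻ t, (‖f' k t‖₊ : ℝ≥0∞) ^ p ∂μ) : ℝ≥0∞) ^ (1/p) :=
          ENNReal.rpow_le_rpow hint (by positivity)
        _ = atTop.liminf fun k => ((∫⁻ t, (‖f' k t‖₊ : ℝ≥0∞) ^ p ∂μ) ^ (1/p)) := h3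
        _ = atTop.liminf fun k => eLpNorm (f' k) q μ := by
          congr 1; funext k; exact (hfq k).symm
        _ = L := by
          rw [hLdef]; congr 1; funext k; exact heLp k
  exact ⟨g, hg.mono fun t ht => ht.1, ⟨hgsm, lt_of_le_of_lt hbound hLlt⟩, hbound⟩
end

section
/- Let n ≥ 3, let 0 < α < min{2, n/2}, let β = (4−2α)/(n−2), and let γ, γ̃ ∈ (0,1) satisfy (α − γ̃ − β)/(β+1) ≤ γ ≤ (α − γ̃)/(β+1) and γ < (n−2)/2. Then there exists a real number x with all of the following: (1+γ)/n < x; 1/2 − (1−γ)/n ≤ x < 1/2; and 1/(2(β+1)) + γ/n + (γ̃ + β − α)/(n(β+1)) < x < 1/(2(β+1)) + γ/n + (1 + β − α)/(n(β+1)). -/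
/-!
Write a candidate exponent as `x = 1/2 + c/n`. Using `β (n - 2) = 4 - 2α`, the two Hölder
endpoints become `1/2 + (γ - (2 - m)/(β + 1))/n` with `m = γ̃` and `m = 1`, so every constraint
on `x` becomes a linear constraint on `c`: three lower bounds `1 + γ - n/2`, `γ - 1`,
`γ - (2 - γ̃)/(β + 1)` and two upper bounds `0`, `γ - 1/(β + 1)`. Each lower bound lies below
each upper bound because `0 < β`, `γ (β + 1) ≤ α - γ̃ < 2 - γ̃`, and `1/(β + 1) < n/2 - 1`, which is `α < n/2` in disguise.
-/

lemma add_div_lt_add_div_iff {a b c n : ℝ} (hn : 0 < n) :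
    a + b / n < a + c / n ↔ b < c := by
  rw [add_lt_add_iff_left, div_lt_div_iff_of_pos_right hn]

lemma div_eq_half_add_div {n a : ℝ} (hn : n ≠ 0) : a / n = 1 / 2 + (a - n / 2) / n := by
  field_simp
  ring

lemma holder_endpoint_eq {n α β γ m : ℝ} (hn : n ≠ 0) (hβ : β + 1 ≠ 0)
    (hβn : β * (n - 2) = 4 - 2 * α) :
    1 / (2 * (β + 1)) + γ / n + (m + β - α) / (n * (β + 1)) =
      1 / 2 + (γ - (2 - m) / (β + 1)) / n := by
  field_simp
  linear_combination -hβn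

lemma one_div_add_one_lt_half_sub_one {n α β : ℝ} (hβ : 0 < β + 1)
    (hβn : β * (n - 2) = 4 - 2 * α) (hα : α < n / 2) :
    1 / (β + 1) < n / 2 - 1 := by
  rw [div_lt_iff₀ hβ]
  linarith

lemma exists_normalized_exponent {n β γ γt : ℝ} (hβ : 0 < β) (hγ1 : γ < 1) (hγt1 : γt < 1)
    (hg3 : γ < (n - 2) / 2) (hγβ : γ < (2 - γt) / (β + 1)) (hβn : 1 / (β + 1) < n / 2 - 1) :
    ∃ c : ℝ, (1 + γ - n / 2 < c ∧ γ - 1 < c ∧ γ - (2 - γt) / (β + 1) < c) ∧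
      (c < 0 ∧ c < γ - 1 / (β + 1)) := by
  have hβ1 : 0 < β + 1 := by linarith
  have h1 : 1 / (β + 1) < 1 := (div_lt_one hβ1).mpr (by linarith)
  have h2 : 1 / (β + 1) < (2 - γt) / (β + 1) := div_lt_div_of_pos_right (by linarith) hβ1
  have hwindow : max (1 + γ - n / 2) (max (γ - 1) (γ - (2 - γt) / (β + 1))) <
      min 0 (γ - 1 / (β + 1)) := by
    simp only [max_lt_iff, lt_min_iff]
    and_intros <;> linarith
  obtain ⟨c, hlo, hhi⟩ := exists_between hwindow
  simp only [max_lt_iff, lt_min_iff] at hlo hhi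
  exact ⟨c, hlo, hhi⟩

theorem common_exponent_exists_general (n : ℕ) (hn : 3 ≤ n) (α β γ γt : ℝ)
    (hα : α < min 2 ((n : ℝ) / 2)) (hβ : β = (4 - 2 * α) / ((n : ℝ) - 2))
    (hγ1 : γ < 1) (hγt1 : γt < 1)
    (hg2 : γ ≤ (α - γt) / (β + 1))
    (hg3 : γ < ((n : ℝ) - 2) / 2) :
    ∃ x : ℝ,
      (1 + γ) / n < x ∧
      (1 / 2 - (1 - γ) / n ≤ x ∧ x < 1 / 2) ∧
      (1 / (2 * (β + 1)) + γ / n + (γt + β - α) / (n * (β + 1)) < x ∧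
        x < 1 / (2 * (β + 1)) + γ / n + (1 + β - α) / (n * (β + 1))) := by
  obtain ⟨hα2, hαn⟩ := lt_min_iff.mp hα
  have hn2 : (0 : ℝ) < n - 2 := by
    have : (3 : ℝ) ≤ n := by exact_mod_cast hn
    linarith
  have hn0 : (0 : ℝ) < n := by linarith
  have hβ0 : 0 < β := hβ ▸ div_pos (by linarith) hn2
  have hβ1 : 0 < β + 1 := by linarith
  have hβn : β * (n - 2) = 4 - 2 * α := by rw [hβ, div_mul_cancel₀ _ hn2.ne']
  obtain ⟨c, ⟨hlo₁, hlo₂, hlo₃⟩, hhi₁, hhi₂⟩ := exists_normalized_exponent hβ0 hγ1 hγt1 hg3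
    (hg2.trans_lt (div_lt_div_of_pos_right (by linarith) hβ1))
    (one_div_add_one_lt_half_sub_one hβ1 hβn hαn)
  have hU := holder_endpoint_eq (γ := γ) (m := 1) hn0.ne' hβ1.ne' hβn
  have hL := holder_endpoint_eq (γ := γ) (m := γt) hn0.ne' hβ1.ne' hβn
  norm_num only at hU
  refine ⟨1 / 2 + c / n, ?_, ⟨?_, ?_⟩, ?_, ?_⟩
  · rw [div_eq_half_add_div hn0.ne', add_div_lt_add_div_iff hn0]
    exact hlo₁
  · rw [show 1 / 2 - (1 - γ) / n = 1 / 2 + (γ - 1) / n by ring]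
    exact ((add_div_lt_add_div_iff hn0).mpr hlo₂).le
  · simpa using div_neg_of_neg_of_pos hhi₁ hn0
  · rw [hL, add_div_lt_add_div_iff hn0]
    exact hlo₃
  · rw [hU, add_div_lt_add_div_iff hn0]
    exact hhi₂

/-- Exponent compatibility: under the energy-critical assumptions there exists a common
reciprocal exponent `x = 1/r` satisfying simultaneously `(1+γ)/n < x`, the admissibility
range `1/2 - (1-γ)/n ≤ x < 1/2`, and the range induced through Hölder scaling by
`γ̃`-admissible pairs `(q̃,r̃)` with `q̃ > 2`. -/
theorem common_exponent_exists (n : ℕ) (hn : 3 ≤ n) (α β γ γt : ℝ)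
    (hα0 : 0 < α) (hα : α < min 2 ((n : ℝ) / 2)) (hβ : β = (4 - 2 * α) / ((n : ℝ) - 2))
    (hγ0 : 0 < γ) (hγ1 : γ < 1) (hγt0 : 0 < γt) (hγt1 : γt < 1)
    (hg1 : (α - γt - β) / (β + 1) ≤ γ) (hg2 : γ ≤ (α - γt) / (β + 1))
    (hg3 : γ < ((n : ℝ) - 2) / 2) :
    ∃ x : ℝ,
      (1 + γ) / n < x ∧
      (1 / 2 - (1 - γ) / n ≤ x ∧ x < 1 / 2) ∧
      (1 / (2 * (β + 1)) + γ / n + (γt + β - α) / (n * (β + 1)) < x ∧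
        x < 1 / (2 * (β + 1)) + γ / n + (1 + β - α) / (n * (β + 1))) :=
  common_exponent_exists_general n hn α β γ γt hα hβ hγ1 hγt1 hg2 hg3
end
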